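/- arXiv:math/0609069 — 4 statements merged into one kernel-verified Lean document; each statement's English description precedes it below -/
import Mathlib

section
/- Let A, B : X → 2^{X*} be maximal monotone operators on a real Banach space X whose graphs are linear subspaces, and let (x₀, x₀*) ∈ X × X*. Suppose there exists y* ∈ X* such that ⟨z − x₀, x* − y*⟩ + ⟨x − x₀, z* − x₀* + y*⟩ ≥ 0 for all (z, x*) ∈ graph A and (x, z*) ∈ graph B. Then y* ∈ Ax₀ and x₀* − y* ∈ Bx₀, hence x₀* ∈ (A + B)x₀. -/
noncomputable section

variable {X : Type*} [NormedAddCommGroup X] [NormedSpace ℝ X] [CompleteSpace X]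

def IsMonotoneOp (A : Set (X × (X →L[ℝ] ℝ))) : Prop :=
  ∀ p ∈ A, ∀ q ∈ A, 0 ≤ (p.2 - q.2) (p.1 - q.1)

def IsMaximalMonotoneOp (A : Set (X × (X →L[ℝ] ℝ))) : Prop :=
  IsMonotoneOp A ∧ ∀ x₀ : X, ∀ ys : X →L[ℝ] ℝ,
    (∀ p ∈ A, 0 ≤ (p.2 - ys) (p.1 - x₀)) → (x₀, ys) ∈ A

theorem mem_sum_of_joint_ineq (A B : Submodule ℝ (X × (X →L[ℝ] ℝ)))
    (hA : IsMaximalMonotoneOp (A : Set (X × (X →L[ℝ] ℝ))))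
    (hB : IsMaximalMonotoneOp (B : Set (X × (X →L[ℝ] ℝ))))
    (x₀ : X) (x₀s ys : X →L[ℝ] ℝ)
    (h : ∀ p ∈ A, ∀ q ∈ (B : Set (X × (X →L[ℝ] ℝ))),
      0 ≤ (p.2 - ys) (p.1 - x₀) + (q.2 - x₀s + ys) (q.1 - x₀)) :
    (x₀, ys) ∈ A ∧ (x₀, x₀s - ys) ∈ B ∧
      ∃ as bs : X →L[ℝ] ℝ, (x₀, as) ∈ A ∧ (x₀, bs) ∈ B ∧ x₀s = as + bs := by
  have key : ∀ q : X × (X →L[ℝ] ℝ),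
      (q.2 - (x₀s - ys)) (q.1 - x₀) = (q.2 - x₀s + ys) (q.1 - x₀) := by
    intro q
    simp [ContinuousLinearMap.sub_apply, ContinuousLinearMap.add_apply]
    ring
  have hAmem : (x₀, ys) ∈ A := by
    apply hA.2
    intro p hp
    by_contra hc
    push_neg at hc
    have hBmem : (x₀, x₀s - ys) ∈ B := by
      apply hB.2
      intro q hq
      have h0 := h p hp q hq
      rw [key]
      linarith
    have h1 := h p hp (x₀, x₀s - ys) hBmem
    simp [ContinuousLinearMap.sub_apply, map_sub] at h1 hc
    linarith
  have hBmem : (x₀, x₀s - ys) ∈ B := by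
    apply hB.2
    intro q hq
    have h0 := h (x₀, ys) hAmem q hq
    simp at h0
    rw [key]
    simp [ContinuousLinearMap.sub_apply, ContinuousLinearMap.add_apply, map_sub]
    linarith
  exact ⟨hAmem, hBmem, ys, x₀s - ys, hAmem, hBmem, by abel⟩
end
end

section
/- Let A, B : X → 2^{X*} be maximal monotone operators on a real Banach space X whose graphs are linear subspaces, and assume D(A) − D(B) = {a − b : a ∈ D(A), b ∈ D(B)} is closed in X. Then the operator A + B, defined by (A + B)x = {a* + b* : a* ∈ Ax, b* ∈ Bx} with domain D(A) ∩ D(B), is maximal monotone. -/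
noncomputable section

variable {X : Type*} [NormedAddCommGroup X] [NormedSpace ℝ X] [CompleteSpace X]

/-- Domain of a multivalued operator. -/
def DomOp (A : Set (X × (X →L[ℝ] ℝ))) : Set X := {x | ∃ xs, (x, xs) ∈ A}

/-- Graph of the Minkowski sum A + B. -/
def SumOp (A B : Set (X × (X →L[ℝ] ℝ))) : Set (X × (X →L[ℝ] ℝ)) :=
  {p | ∃ as bs : X →L[ℝ] ℝ, (p.1, as) ∈ A ∧ (p.1, bs) ∈ B ∧ p.2 = as + bs}

/-!
Given `(z, z*)` monotonically related to `A + B`, the function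
`f (a, b) = ⟨a*, a - z⟩ + ⟨b* - z*, b - z⟩` on `A × B` is convex (monotonicity makes the
pairing convex along segments of the graphs) and nonnegative on the kernel of `(a, b) ↦ a - b`. That map has
the closed range `D(A) - D(B)`, so by the open mapping theorem and Hahn–Banach separation of the
origin from the strict epigraph of `f`, some `u ∈ X*` satisfies `⟨u, a - b⟩ ≤ f (a, b)`. This
splits as `0 ≤ ⟨a* - u, a - z⟩ + ⟨b* - (z* - u), b - z⟩` for all `a ∈ A`, `b ∈ B`, and
maximality of `A` and `B` then forces `(z, u) ∈ A` and `(z, z* - u) ∈ B`.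
-/

open Set

section Separation

variable {E F : Type*} [NormedAddCommGroup E] [NormedSpace ℝ E] [CompleteSpace E]
  [NormedAddCommGroup F] [NormedSpace ℝ F] [CompleteSpace F]

theorem exists_dual_comp_le_of_surjective (T : E →L[ℝ] F) (hT : Function.Surjective T)
    {f : E → ℝ} (hf : ConvexOn ℝ univ f) (hfc : Continuous f) (h0 : ∀ e, T e = 0 → 0 ≤ f e) :
    ∃ φ : F →L[ℝ] ℝ, ∀ e, φ (T e) ≤ f e := by
  let P : E × ℝ →L[ℝ] F × ℝ := T.prodMap (ContinuousLinearMap.id ℝ ℝ)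
  let S : Set (F × ℝ) := P '' {p | p.1 ∈ univ ∧ f p.1 < p.2}
  have hS_open : IsOpen S := by
    simp only [S, P, ContinuousLinearMap.coe_prodMap', mem_univ, true_and]
    exact (T.isOpenMap hT).prodMap IsOpenMap.id _
      (isOpen_lt (hfc.comp continuous_fst) continuous_snd)
  have hS_conv : Convex ℝ S := hf.convex_strict_epigraph.linear_image (P : E × ℝ →ₗ[ℝ] F × ℝ)
  have hS_zero : (0 : F × ℝ) ∉ S := by
    rintro ⟨⟨e, r⟩, ⟨-, hlt⟩, heq⟩
    obtain ⟨hTe, rfl⟩ := Prod.ext_iff.mp heq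
    exact (h0 e hTe).not_gt hlt
  obtain ⟨Λ, hΛ⟩ := geometric_hahn_banach_open_point hS_conv hS_open hS_zero
  let ψ : F →L[ℝ] ℝ := Λ ∘L ContinuousLinearMap.inl ℝ F ℝ
  set κ := Λ (0, 1)
  have hΛ_lt : ∀ e r, f e < r → ψ (T e) < r * -κ := by
    intro e r hr
    have hsplit : Λ (T e, r) = ψ (T e) + r * κ := by
      have : ((T e, r) : F × ℝ) = (T e, 0) + r • (0, 1) := by simp
      rw [this, map_add, map_smul, smul_eq_mul]
      rfl
    have := hΛ (T e, r) ⟨(e, r), ⟨mem_univ _, hr⟩, rfl⟩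
    rw [map_zero, hsplit] at this
    linarith
  have hκ : 0 < -κ := by
    have := hΛ_lt 0 (|f 0| + 1) (by linarith [le_abs_self (f 0)])
    rw [map_zero, map_zero] at this
    exact pos_of_mul_pos_right this (by positivity)
  refine ⟨(-κ)⁻¹ • ψ, fun e => le_of_forall_gt fun r hr => ?_⟩
  rw [smul_apply, smul_eq_mul, inv_mul_lt_iff₀ hκ, mul_comm]
  exact hΛ_lt e r hr

theorem exists_dual_comp_le_of_isClosed_range (T : E →L[ℝ] F) (hT : IsClosed (range T))
    {f : E → ℝ} (hf : ConvexOn ℝ univ f) (hfc : Continuous f) (h0 : ∀ e, T e = 0 → 0 ≤ f e) :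
    ∃ φ : F →L[ℝ] ℝ, ∀ e, φ (T e) ≤ f e := by
  let M : Submodule ℝ F := LinearMap.range (T : E →ₗ[ℝ] F)
  have : CompleteSpace M := (hT : IsClosed (M : Set F)).completeSpace_coe
  let T' : E →L[ℝ] M := T.codRestrict M (LinearMap.mem_range_self (T : E →ₗ[ℝ] F))
  have hT' : Function.Surjective T' := by
    rintro ⟨_, e, rfl⟩
    exact ⟨e, rfl⟩
  obtain ⟨φ, hφ⟩ := exists_dual_comp_le_of_surjective T' hT' hf hfc
    fun e he => h0 e (congrArg Subtype.val he)
  obtain ⟨ψ, hψ, -⟩ := exists_extension_norm_eq M φ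
  exact ⟨ψ, fun e => (hψ (T' e)).trans_le (hφ e)⟩

end Separation

section MonotoneOperators

variable {E : Type*} [NormedAddCommGroup E] [NormedSpace ℝ E]

theorem IsMonotoneOp.sumOp {A B : Set (E × (E →L[ℝ] ℝ))} (hA : IsMonotoneOp A)
    (hB : IsMonotoneOp B) : IsMonotoneOp (SumOp A B) := by
  rintro p ⟨a₁, b₁, ha₁, hb₁, hp⟩ q ⟨a₂, b₂, ha₂, hb₂, hq⟩
  have hA' := hA _ ha₁ _ ha₂
  have hB' := hB _ hb₁ _ hb₂
  simp only [hp, hq, sub_apply, add_apply] at hA' hB' ⊢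
  linarith

theorem IsMaximalMonotoneOp.isClosed {A : Set (E × (E →L[ℝ] ℝ))}
    (hA : IsMaximalMonotoneOp A) : IsClosed A := by
  have hA_eq : A = ⋂ q ∈ A, {p : E × (E →L[ℝ] ℝ) | 0 ≤ (q.2 - p.2) (q.1 - p.1)} := by
    ext p
    simp only [mem_iInter, mem_ofPred_eq]
    exact ⟨fun hp q hq => hA.1 q hq p hp, hA.2 p.1 p.2⟩
  rw [hA_eq]
  exact isClosed_biInter fun q _ => isClosed_le continuous_const
    ((continuous_const.sub continuous_snd).clm_apply (continuous_const.sub continuous_fst))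

/-- On the segment `a • p + b • q` the function falls below the chord by
`a * b * ⟨p* - q*, p - q⟩ ≥ 0`. -/
theorem IsMonotoneOp.convexOn_pairing_sub {A : Set (E × (E →L[ℝ] ℝ))} (hA : IsMonotoneOp A)
    (hconv : Convex ℝ A) (c : E × (E →L[ℝ] ℝ)) :
    ConvexOn ℝ A fun p => (p.2 - c.2) (p.1 - c.1) := by
  refine ⟨hconv, fun p hp q hq a b ha hb hab => ?_⟩
  obtain rfl : b = 1 - a := by linarith
  have hpq := hA p hp q hq
  simp only [Prod.fst_add, Prod.snd_add, Prod.smul_fst, Prod.smul_snd, sub_apply, add_apply,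
    smul_apply, map_add, map_sub, map_smul, smul_eq_mul] at hpq ⊢
  nlinarith [mul_nonneg (mul_nonneg ha hb) hpq]

theorem IsMaximalMonotoneOp.mem_of_pairing_add_nonneg {A B : Set (E × (E →L[ℝ] ℝ))}
    (hA : IsMaximalMonotoneOp A) (hB : IsMaximalMonotoneOp B) {z : E} {u v : E →L[ℝ] ℝ}
    (h : ∀ p ∈ A, ∀ q ∈ B, 0 ≤ (p.2 - u) (p.1 - z) + (q.2 - v) (q.1 - z)) : (z, u) ∈ A := by
  refine hA.2 z u fun p hp => ?_
  by_contra! hneg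
  have hv : (z, v) ∈ B := hB.2 z v fun q hq => by linarith [h p hp q hq]
  have := h p hp _ hv
  simp only [sub_self, map_zero, add_zero] at this
  exact this.not_gt hneg

variable (A B : Submodule ℝ (E × (E →L[ℝ] ℝ)))

def domainDiff : A × B →L[ℝ] E :=
  ContinuousLinearMap.fst ℝ E (E →L[ℝ] ℝ) ∘L A.subtypeL ∘L ContinuousLinearMap.fst ℝ A B +
    (-ContinuousLinearMap.fst ℝ E (E →L[ℝ] ℝ)) ∘L B.subtypeL ∘L ContinuousLinearMap.snd ℝ A B

@[simp]
theorem domainDiff_apply (e : A × B) :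
    domainDiff A B e = (e.1 : E × (E →L[ℝ] ℝ)).1 - (e.2 : E × (E →L[ℝ] ℝ)).1 :=
  (sub_eq_add_neg _ _).symm

theorem range_domainDiff : range (domainDiff A B) =
    {d | ∃ a ∈ DomOp (A : Set (E × (E →L[ℝ] ℝ))), ∃ b ∈ DomOp (B : Set (E × (E →L[ℝ] ℝ))),
      d = a - b} := by
  ext d
  constructor
  · rintro ⟨⟨⟨⟨a, as⟩, ha⟩, ⟨⟨b, bs⟩, hb⟩⟩, rfl⟩
    exact ⟨a, ⟨as, ha⟩, b, ⟨bs, hb⟩, domainDiff_apply A B _⟩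
  · rintro ⟨a, ⟨as, ha⟩, b, ⟨bs, hb⟩, rfl⟩
    exact ⟨(⟨(a, as), ha⟩, ⟨(b, bs), hb⟩), domainDiff_apply A B _⟩

theorem exists_pairing_add_nonneg_of_sumOp [CompleteSpace E]
    (hA : IsMonotoneOp (A : Set (E × (E →L[ℝ] ℝ)))) (hB : IsMonotoneOp (B : Set (E × (E →L[ℝ] ℝ))))
    (hA_closed : IsClosed (A : Set (E × (E →L[ℝ] ℝ))))
    (hB_closed : IsClosed (B : Set (E × (E →L[ℝ] ℝ))))
    (hD : IsClosed (range (domainDiff A B))) {z : E} {zs : E →L[ℝ] ℝ}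
    (hrel : ∀ p ∈ SumOp (A : Set (E × (E →L[ℝ] ℝ))) B, 0 ≤ (p.2 - zs) (p.1 - z)) :
    ∃ u : E →L[ℝ] ℝ, ∀ p ∈ (A : Set (E × (E →L[ℝ] ℝ))), ∀ q ∈ (B : Set (E × (E →L[ℝ] ℝ))),
      0 ≤ (p.2 - u) (p.1 - z) + (q.2 - (zs - u)) (q.1 - z) := by
  have := hA_closed.completeSpace_coe
  have := hB_closed.completeSpace_coe
  let f : A × B → ℝ := fun e =>
    ((e.1 : E × (E →L[ℝ] ℝ)).2 - 0) ((e.1 : E × (E →L[ℝ] ℝ)).1 - z) +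
    ((e.2 : E × (E →L[ℝ] ℝ)).2 - zs) ((e.2 : E × (E →L[ℝ] ℝ)).1 - z)
  have hf : ConvexOn ℝ univ f :=
    (((hA.convexOn_pairing_sub A.convex (z, 0)).comp_linearMap
        (A.subtype ∘ₗ LinearMap.fst ℝ A B)).subset (fun e _ => e.1.2) convex_univ).add
    (((hB.convexOn_pairing_sub B.convex (z, zs)).comp_linearMap
        (B.subtype ∘ₗ LinearMap.snd ℝ A B)).subset (fun e _ => e.2.2) convex_univ)
  have hf_kernel : ∀ e, domainDiff A B e = 0 → 0 ≤ f e := by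
    rintro ⟨⟨⟨a, as⟩, ha⟩, ⟨⟨b, bs⟩, hb⟩⟩ he
    obtain rfl : a = b := sub_eq_zero.mp ((domainDiff_apply A B _).symm.trans he)
    have := hrel (a, as + bs) ⟨as, bs, ha, hb, rfl⟩
    simp only [f, sub_apply, add_apply, sub_zero] at this ⊢
    linarith
  obtain ⟨u, hu⟩ := exists_dual_comp_le_of_isClosed_range (E := A × B) (domainDiff A B) hD hf
    (by fun_prop) hf_kernel
  refine ⟨u, fun p hp q hq => ?_⟩
  have := hu (⟨p, hp⟩, ⟨q, hq⟩)
  simp only [f, domainDiff_apply, map_sub, sub_apply, sub_zero] at this ⊢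
  linarith

end MonotoneOperators

/-- The sum theorem for linear maximal monotone operators. -/
theorem sum_maximalMonotone (A B : Submodule ℝ (X × (X →L[ℝ] ℝ)))
    (hA : IsMaximalMonotoneOp (A : Set (X × (X →L[ℝ] ℝ))))
    (hB : IsMaximalMonotoneOp (B : Set (X × (X →L[ℝ] ℝ))))
    (hclosed : IsClosed {d : X | ∃ a ∈ DomOp (A : Set (X × (X →L[ℝ] ℝ))),
      ∃ b ∈ DomOp (B : Set (X × (X →L[ℝ] ℝ))), d = a - b}) :
    IsMaximalMonotoneOp (SumOp (A : Set (X × (X →L[ℝ] ℝ))) (B : Set (X × (X →L[ℝ] ℝ)))) := by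
  refine ⟨hA.1.sumOp hB.1, fun z zs hrel => ?_⟩
  obtain ⟨u, hu⟩ := exists_pairing_add_nonneg_of_sumOp A B hA.1 hB.1 hA.isClosed hB.isClosed
    (range_domainDiff A B ▸ hclosed) hrel
  refine ⟨u, zs - u, hA.mem_of_pairing_add_nonneg hB hu,
    hB.mem_of_pairing_add_nonneg (v := u) hA fun q hq p hp => ?_, by abel⟩
  linarith [hu p hp q hq]
end
end

section
/- Let A : X → 2^{X*} be a monotone operator whose graph is a linear subspace, and fix (x₀, x₀*) ∈ X × X*. Then the function β : X × X* → ℝ ∪ {+∞} defined by β(x, x*) = ⟨x − x₀, x*⟩ − ⟨x, x₀*⟩ if (x, x*) ∈ graph A and +∞ otherwise, is convex; and if additionally the graph of A is closed in the norm topology of X × X*, then β is lower semicontinuous. -/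
noncomputable section

open scoped Classical

variable {X : Type*} [NormedAddCommGroup X] [NormedSpace ℝ X] [CompleteSpace X]

/-- β(x,x*) = ⟨x − x₀, x*⟩ − ⟨x, x₀*⟩ on the graph of A, +∞ elsewhere. -/
def betaFn (A : Set (X × (X →L[ℝ] ℝ))) (x₀ : X) (x₀s : X →L[ℝ] ℝ) :
    X × (X →L[ℝ] ℝ) → EReal :=
  fun p => if p ∈ A then ((p.2 (p.1 - x₀) - x₀s p.1 : ℝ) : EReal) else ⊤

lemma convexAux (a b Pp Qp Pq Qq u v s t : ℝ) (ha : 0 ≤ a) (hb : 0 ≤ b) (hab : a + b = 1)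
    (hm : 0 ≤ Pp - Qp - (Pq - Qq)) :
    a * (a * Pp + b * Qp) + b * (a * Pq + b * Qq) - (a * u + b * v) - (a * s + b * t) ≤
      a * (Pp - u - s) + b * (Qq - v - t) := by
  have hb' : b = 1 - a := by linarith
  subst hb'
  nlinarith [mul_nonneg (mul_nonneg ha (by linarith : (0:ℝ) ≤ 1 - a)) hm]

theorem beta_convex_lsc (A : Submodule ℝ (X × (X →L[ℝ] ℝ)))
    (hmono : IsMonotoneOp (A : Set (X × (X →L[ℝ] ℝ)))) (x₀ : X) (x₀s : X →L[ℝ] ℝ) :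
    (∀ p q : X × (X →L[ℝ] ℝ), ∀ a b : ℝ, 0 ≤ a → 0 ≤ b → a + b = 1 →
      betaFn (A : Set (X × (X →L[ℝ] ℝ))) x₀ x₀s (a • p + b • q) ≤
        (a : EReal) * betaFn (A : Set (X × (X →L[ℝ] ℝ))) x₀ x₀s p +
        (b : EReal) * betaFn (A : Set (X × (X →L[ℝ] ℝ))) x₀ x₀s q) ∧
    (IsClosed (A : Set (X × (X →L[ℝ] ℝ))) →
      LowerSemicontinuous (betaFn (A : Set (X × (X →L[ℝ] ℝ))) x₀ x₀s)) := by
  set g : X × (X →L[ℝ] ℝ) → ℝ := fun q => q.2 (q.1 - x₀) - x₀s q.1 with hg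
  set β := betaFn (A : Set (X × (X →L[ℝ] ℝ))) x₀ x₀s with hβ
  have hmemβ : ∀ r : X × (X →L[ℝ] ℝ), r ∈ A → β r = ((g r : ℝ) : EReal) := by
    intro r hr
    have : r ∈ (A : Set (X × (X →L[ℝ] ℝ))) := hr
    simp only [hβ, betaFn, if_pos this, hg]
  have hnmemβ : ∀ r : X × (X →L[ℝ] ℝ), r ∉ A → β r = ⊤ := by
    intro r hr
    have : r ∉ (A : Set (X × (X →L[ℝ] ℝ))) := hr
    simp only [hβ, betaFn, if_neg this]
  have hgcont : Continuous g := by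
    apply Continuous.sub
    · exact isBoundedBilinearMap_apply.continuous.comp
        (continuous_snd.prodMk (continuous_fst.sub continuous_const))
    · exact x₀s.continuous.comp continuous_fst
  have hge : ∀ q, ((g q : ℝ) : EReal) ≤ β q := by
    intro q
    by_cases hq : q ∈ A
    · rw [hmemβ q hq]
    · rw [hnmemβ q hq]; exact le_top
  constructor
  · intro p q a b ha hb hab
    rcases eq_or_lt_of_le ha with ha0 | hapos
    · have hb1 : b = 1 := by linarith
      subst hb1
      rw [← ha0]
      simp
    rcases eq_or_lt_of_le hb with hb0 | hbpos
    · have ha1 : a = 1 := by linarith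
      subst ha1
      rw [← hb0]
      simp
    by_cases hp : p ∈ A
    · by_cases hq : q ∈ A
      · have hmem : a • p + b • q ∈ A := A.add_mem (A.smul_mem a hp) (A.smul_mem b hq)
        have hmono' := hmono p hp q hq
        simp only [ContinuousLinearMap.sub_apply, map_sub] at hmono'
        rw [hmemβ _ hmem, hmemβ _ hp, hmemβ _ hq, ← EReal.coe_mul, ← EReal.coe_mul,
          ← EReal.coe_add, EReal.coe_le_coe_iff]
        have h1 : (a • p + b • q).1 = a • p.1 + b • q.1 := rfl
        have h2 : (a • p + b • q).2 = a • p.2 + b • q.2 := rfl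
        simp only [hg, h1, h2, ContinuousLinearMap.add_apply, ContinuousLinearMap.coe_smul',
          Pi.smul_apply, map_add, map_sub, map_smul, smul_eq_mul]
        linarith [convexAux a b (p.2 p.1) (q.2 p.1) (p.2 q.1) (q.2 q.1) (p.2 x₀) (q.2 x₀)
          (x₀s p.1) (x₀s q.1) ha hb hab hmono']
      · have hbtop : (b : EReal) * β q = ⊤ := by
          rw [hnmemβ q hq]
          exact EReal.coe_mul_top_of_pos hbpos
        have hanebot : (a : EReal) * β p ≠ ⊥ := by
          rw [hmemβ p hp, ← EReal.coe_mul]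
          exact EReal.coe_ne_bot _
        rw [hbtop, EReal.add_top_of_ne_bot hanebot]
        exact le_top
    · have hatop : (a : EReal) * β p = ⊤ := by
        rw [hnmemβ p hp]
        exact EReal.coe_mul_top_of_pos hapos
      have hbnebot : (b : EReal) * β q ≠ ⊥ := by
        by_cases hq : q ∈ A
        · rw [hmemβ q hq, ← EReal.coe_mul]
          exact EReal.coe_ne_bot _
        · rw [hnmemβ q hq, EReal.coe_mul_top_of_pos hbpos]
          exact top_ne_bot
      rw [hatop, EReal.top_add_of_ne_bot hbnebot]
      exact le_top
  · intro hclosed p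
    by_cases hp : p ∈ A
    · intro y hy
      rw [hmemβ p hp] at hy
      have hcont : Continuous (fun q => ((g q : ℝ) : EReal)) :=
        continuous_coe_real_ereal.comp hgcont
      have hopen : IsOpen {q | y < ((g q : ℝ) : EReal)} :=
        isOpen_lt continuous_const hcont
      filter_upwards [hopen.mem_nhds hy] with q hq
      exact lt_of_lt_of_le hq (hge q)
    · intro y hy
      have hopen : IsOpen ((A : Set (X × (X →L[ℝ] ℝ)))ᶜ) := hclosed.isOpen_compl
      have hmem : p ∈ ((A : Set (X × (X →L[ℝ] ℝ)))ᶜ) := hp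
      filter_upwards [hopen.mem_nhds hmem] with q hq
      rw [hnmemβ q hq]
      rw [hnmemβ p hp] at hy
      exact hy
end
end

section
/- Let A, B : X → 2^{X*} be maximal monotone operators on a real Banach space X with D(A) and D(B) linear subspaces and graphs linear subspaces, and let (x₀, x₀*) be monotonically related to A + B. If there exists y* ∈ X* such that for all x, z ∈ X, x*, z* ∈ X* the inequality α(z, x*) + β(x, z*) + ⟨x₀, x₀*⟩ − ⟨z − x, y*⟩ ≥ 0 holds, where α(z,x*) = ⟨z − x₀, x*⟩ + ι_{graph A}(z,x*) and β(x,z*) = ⟨x − x₀, z*⟩ − ⟨x, x₀*⟩ + ι_{graph B}(x,z*), then x₀* ∈ (A + B)x₀. -/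
/-!
On the graphs, the dual inequality splits as `φ_A(z, x*) + φ_B(x, z*) ≥ 0` with
`φ_A(z, x*) = ⟨z - x₀, x* - y*⟩` and `φ_B(x, z*) = ⟨x - x₀, z* - (x₀* - y*)⟩`. Hence one of
`φ_A ≥ 0` on `graph A`, `φ_B ≥ 0` on `graph B` holds, and maximality turns it into
`(x₀, y*) ∈ graph A`, resp. `(x₀, x₀* - y*) ∈ graph B`. At that point the summand vanishes, so
the other function is nonnegative on its graph as well, and maximality gives the other
membership: `x₀* = y* + (x₀* - y*) ∈ (A + B) x₀`.
-/

noncomputable section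

open scoped Classical

variable {X : Type*} [NormedAddCommGroup X] [NormedSpace ℝ X] [CompleteSpace X]

def alphaFn (A : Set (X × (X →L[ℝ] ℝ))) (x₀ : X) : X × (X →L[ℝ] ℝ) → EReal :=
  fun p => if p ∈ A then ((p.2 (p.1 - x₀) : ℝ) : EReal) else ⊤

theorem forall_nonneg_or_forall_nonneg_of_add_nonneg {α β : Type*} {S : Set α} {T : Set β}
    {f : α → ℝ} {g : β → ℝ} (h : ∀ p ∈ S, ∀ q ∈ T, 0 ≤ f p + g q) :
    (∀ p ∈ S, 0 ≤ f p) ∨ ∀ q ∈ T, 0 ≤ g q := by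
  by_contra! ⟨⟨p, hp, hfp⟩, ⟨q, hq, hgq⟩⟩
  linarith [h p hp q hq]

section

variable {E : Type*} [NormedAddCommGroup E] [NormedSpace ℝ E]

theorem alphaFn_of_mem {A : Set (E × (E →L[ℝ] ℝ))} {x₀ : E} {p : E × (E →L[ℝ] ℝ)}
    (hp : p ∈ A) : alphaFn A x₀ p = ((p.2 (p.1 - x₀) : ℝ) : EReal) :=
  if_pos hp

theorem betaFn_of_mem {B : Set (E × (E →L[ℝ] ℝ))} {x₀ : E} {x₀s : E →L[ℝ] ℝ}
    {p : E × (E →L[ℝ] ℝ)} (hp : p ∈ B) :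
    betaFn B x₀ x₀s p = ((p.2 (p.1 - x₀) - x₀s p.1 : ℝ) : EReal) :=
  if_pos hp

theorem apply_sub_add_apply_sub_nonneg_of_dual_ineq {A B : Set (E × (E →L[ℝ] ℝ))} {x₀ : E}
    {x₀s ys : E →L[ℝ] ℝ}
    (hys : ∀ x z : E, ∀ xs zs : E →L[ℝ] ℝ,
      (0 : EReal) ≤ alphaFn A x₀ (z, xs) + betaFn B x₀ x₀s (x, zs) +
        ((x₀s x₀ : ℝ) : EReal) - ((ys (z - x) : ℝ) : EReal))
    {z x : E} {xs zs : E →L[ℝ] ℝ} (hA : (z, xs) ∈ A) (hB : (x, zs) ∈ B) :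
    0 ≤ (xs - ys) (z - x₀) + (zs - (x₀s - ys)) (x - x₀) := by
  have h := hys x z xs zs
  rw [alphaFn_of_mem hA, betaFn_of_mem hB] at h
  norm_cast at h
  simp only [sub_apply, map_sub] at h ⊢
  linarith

theorem IsMaximalMonotoneOp.mem_of_forall_add_nonneg {A B : Set (E × (E →L[ℝ] ℝ))}
    (hB : IsMaximalMonotoneOp B) {x₀ : E} {a b : E →L[ℝ] ℝ}
    (h : ∀ p ∈ A, ∀ q ∈ B, 0 ≤ (p.2 - a) (p.1 - x₀) + (q.2 - b) (q.1 - x₀))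
    (ha : (x₀, a) ∈ A) : (x₀, b) ∈ B :=
  hB.2 x₀ b fun q hq => by simpa using h _ ha q hq

theorem IsMaximalMonotoneOp.mem_and_mem_of_forall_add_nonneg {A B : Set (E × (E →L[ℝ] ℝ))}
    (hA : IsMaximalMonotoneOp A) (hB : IsMaximalMonotoneOp B) {x₀ : E} {a b : E →L[ℝ] ℝ}
    (h : ∀ p ∈ A, ∀ q ∈ B, 0 ≤ (p.2 - a) (p.1 - x₀) + (q.2 - b) (q.1 - x₀)) :
    (x₀, a) ∈ A ∧ (x₀, b) ∈ B := by
  have h' : ∀ q ∈ B, ∀ p ∈ A, 0 ≤ (q.2 - b) (q.1 - x₀) + (p.2 - a) (p.1 - x₀) :=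
    fun q hq p hp => by rw [add_comm]; exact h p hp q hq
  rcases forall_nonneg_or_forall_nonneg_of_add_nonneg h with hpos | hpos
  · have ha := hA.2 x₀ a hpos
    exact ⟨ha, hB.mem_of_forall_add_nonneg h ha⟩
  · have hb := hB.2 x₀ b hpos
    exact ⟨hA.mem_of_forall_add_nonneg h' hb, hb⟩

end

theorem mem_sum_of_dual_ineq_general (A B : Submodule ℝ (X × (X →L[ℝ] ℝ)))
    (hA : IsMaximalMonotoneOp (A : Set (X × (X →L[ℝ] ℝ))))
    (hB : IsMaximalMonotoneOp (B : Set (X × (X →L[ℝ] ℝ))))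
    (x₀ : X) (x₀s : X →L[ℝ] ℝ)
    (hdual : ∃ ys : X →L[ℝ] ℝ, ∀ x z : X, ∀ xs zs : X →L[ℝ] ℝ,
      (0 : EReal) ≤ alphaFn (A : Set (X × (X →L[ℝ] ℝ))) x₀ (z, xs) +
        betaFn (B : Set (X × (X →L[ℝ] ℝ))) x₀ x₀s (x, zs) +
        ((x₀s x₀ : ℝ) : EReal) - ((ys (z - x) : ℝ) : EReal)) :
    ∃ as bs : X →L[ℝ] ℝ, (x₀, as) ∈ A ∧ (x₀, bs) ∈ B ∧ x₀s = as + bs := by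
  obtain ⟨ys, hys⟩ := hdual
  obtain ⟨ha, hb⟩ := hA.mem_and_mem_of_forall_add_nonneg hB fun p hp q hq =>
    apply_sub_add_apply_sub_nonneg_of_dual_ineq hys hp hq
  exact ⟨ys, x₀s - ys, ha, hb, (add_sub_cancel ys x₀s).symm⟩

theorem mem_sum_of_dual_ineq (A B : Submodule ℝ (X × (X →L[ℝ] ℝ)))
    (hA : IsMaximalMonotoneOp (A : Set (X × (X →L[ℝ] ℝ))))
    (hB : IsMaximalMonotoneOp (B : Set (X × (X →L[ℝ] ℝ))))
    (x₀ : X) (x₀s : X →L[ℝ] ℝ)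
    (hrel : ∀ x : X, ∀ as bs : X →L[ℝ] ℝ, (x, as) ∈ A → (x, bs) ∈ B →
      0 ≤ (as + bs - x₀s) (x - x₀))
    (hdual : ∃ ys : X →L[ℝ] ℝ, ∀ x z : X, ∀ xs zs : X →L[ℝ] ℝ,
      (0 : EReal) ≤ alphaFn (A : Set (X × (X →L[ℝ] ℝ))) x₀ (z, xs) +
        betaFn (B : Set (X × (X →L[ℝ] ℝ))) x₀ x₀s (x, zs) +
        ((x₀s x₀ : ℝ) : EReal) - ((ys (z - x) : ℝ) : EReal)) :
    ∃ as bs : X →L[ℝ] ℝ, (x₀, as) ∈ A ∧ (x₀, bs) ∈ B ∧ x₀s = as + bs :=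
  mem_sum_of_dual_ineq_general A B hA hB x₀ x₀s hdual
end
end
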